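/- arXiv:2111.12187 — 3 statements merged into one kernel-verified Lean document; each statement's English description precedes it below -/
import Mathlib

section
/- Let A ∈ ℝ^{m×n}, let σ : ℝ → ℝ be smooth with σ' > 0, and let γ satisfy γ' = σ' ∘ σ⁻¹ on the image of σ. Define G(x) = σ(Ax) (σ applied componentwise) and H(y) = Aᵀ γ(y) (γ applied componentwise). Then DH_{G(x)} = (DG_x)ᵀ for all x ∈ ℝⁿ, and hence D(H∘G)_x = (DG_x)ᵀ DG_x is symmetric positive semi-definite at every x. -/
open Matrix MeasureTheory

/-- Jacobian matrix of `G` at `x`: entry `(i,j)` is `∂G_i/∂x^j`. -/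
noncomputable def jac {n m : ℕ} (G : (Fin n → ℝ) → (Fin m → ℝ)) (x : Fin n → ℝ) :
    Matrix (Fin m) (Fin n) ℝ :=
  Matrix.of fun i j => fderiv ℝ G x (Pi.single j 1) i

/-- Gradient of a scalar function. -/
noncomputable def grad {n : ℕ} (g : (Fin n → ℝ) → ℝ) (x : Fin n → ℝ) : Fin n → ℝ :=
  fun i => fderiv ℝ g x (Pi.single i 1)

/-- Partial derivative `∂G/∂x^i` (an `ℝ^m`-valued function). -/
noncomputable def pd {n m : ℕ} (G : (Fin n → ℝ) → (Fin m → ℝ)) (i : Fin n)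
    (x : Fin n → ℝ) : Fin m → ℝ :=
  fderiv ℝ G x (Pi.single i 1)

/-- Second partial derivative `∂²G/∂x^k∂x^i`. -/
noncomputable def pd2 {n m : ℕ} (G : (Fin n → ℝ) → (Fin m → ℝ)) (k i : Fin n)
    (x : Fin n → ℝ) : Fin m → ℝ :=
  fderiv ℝ (pd G i) x (Pi.single k 1)

/-- Hessian matrix of a scalar function. -/
noncomputable def hess {n : ℕ} (g : (Fin n → ℝ) → ℝ) (x : Fin n → ℝ) :
    Matrix (Fin n) (Fin n) ℝ :=
  Matrix.of fun i j => fderiv ℝ (fun y => fderiv ℝ g y (Pi.single j 1)) x (Pi.single i 1)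

/-- The convexification line integral `F(x) = ∫₀¹ (DG_{sx})ᵀ DG_{sx} x ds`. -/
noncomputable def cvxify {n m : ℕ} (G : (Fin n → ℝ) → (Fin m → ℝ)) (x : Fin n → ℝ) :
    Fin n → ℝ :=
  ∫ s in (0:ℝ)..1, ((jac G (s • x))ᵀ * jac G (s • x)) *ᵥ x

lemma keyG {m n : ℕ} (B : Matrix (Fin m) (Fin n) ℝ) (f : ℝ → ℝ) (hf : ContDiff ℝ (⊤ : ℕ∞) f)
    (x : Fin n → ℝ) :
    HasFDerivAt (fun x : Fin n → ℝ => fun r => f ((B *ᵥ x) r))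
      ((Matrix.of fun r j => deriv f ((B *ᵥ x) r) * B r j).mulVecLin.toContinuousLinearMap) x := by
  apply hasFDerivAt_pi''
  intro r
  have hℓ : HasFDerivAt (fun x : Fin n → ℝ => (B *ᵥ x) r)
      ((ContinuousLinearMap.proj r).comp B.mulVecLin.toContinuousLinearMap) x := by
    have := ((ContinuousLinearMap.proj r (R := ℝ) (φ := fun _ : Fin m => ℝ)).comp
      B.mulVecLin.toContinuousLinearMap).hasFDerivAt (x := x)
    convert this using 1
    rfl
  have hd : HasDerivAt f (deriv f ((B *ᵥ x) r)) ((B *ᵥ x) r) :=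
    ((hf.differentiable (by simp)) _).hasDerivAt
  have := hd.comp_hasFDerivAt x hℓ
  refine this.congr_fderiv ?_
  ext v
  simp [Matrix.mulVecLin, Matrix.mulVec, dotProduct, Finset.mul_sum, mul_comm, mul_assoc, mul_left_comm]

lemma jac_eq {m n : ℕ} (G : (Fin n → ℝ) → (Fin m → ℝ)) (x : Fin n → ℝ)
    (M : Matrix (Fin m) (Fin n) ℝ)
    (h : HasFDerivAt G M.mulVecLin.toContinuousLinearMap x) :
    jac G x = M := by
  ext i j
  simp [jac, jac, h.fderiv, Matrix.mulVecLin]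

lemma keyH {m n : ℕ} (A : Matrix (Fin m) (Fin n) ℝ) (g : ℝ → ℝ) (hg : ContDiff ℝ (⊤ : ℕ∞) g)
    (y : Fin m → ℝ) :
    HasFDerivAt (fun y : Fin m → ℝ => Aᵀ *ᵥ fun r => g (y r))
      ((Aᵀ * Matrix.of fun r j => deriv g (y r) * (1 : Matrix (Fin m) (Fin m) ℝ) r j).mulVecLin.toContinuousLinearMap) y := by
  have h1 := keyG (1 : Matrix (Fin m) (Fin m) ℝ) g hg y
  simp only [Matrix.one_mulVec] at h1
  have h2 := (Aᵀ.mulVecLin.toContinuousLinearMap.hasFDerivAt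
      (x := fun r => g (y r))).comp y h1
  refine h2.congr_fderiv ?_
  ext v i
  simp [Matrix.mulVecLin, Matrix.mulVec_mulVec]


/-- For `G(x) = σ(Ax)` (componentwise) and `H(y) = Aᵀγ(y)` with
`γ'(σ t) = σ'(t)` (i.e. `γ' = σ' ∘ σ⁻¹` on the image of `σ`), one has
`DH_{G(x)} = (DG_x)ᵀ`, hence `D(H∘G)_x = (DG_x)ᵀ DG_x` is symmetric PSD everywhere. -/
theorem stmt_5 (m n : ℕ) (A : Matrix (Fin m) (Fin n) ℝ) (σ γ : ℝ → ℝ)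
    (hσ : ContDiff ℝ (⊤ : ℕ∞) σ) (hγ : ContDiff ℝ (⊤ : ℕ∞) γ)
    (hσ' : ∀ t, 0 < deriv σ t) (hγ' : ∀ t, deriv γ (σ t) = deriv σ t) :
    ∀ x : Fin n → ℝ,
      jac (fun y : Fin m → ℝ => Aᵀ *ᵥ fun r => γ (y r)) (fun r => σ ((A *ᵥ x) r)) =
        (jac (fun x : Fin n → ℝ => fun r => σ ((A *ᵥ x) r)) x)ᵀ ∧
      jac ((fun y : Fin m → ℝ => Aᵀ *ᵥ fun r => γ (y r)) ∘
            fun x : Fin n → ℝ => fun r => σ ((A *ᵥ x) r)) x =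
        (jac (fun x : Fin n → ℝ => fun r => σ ((A *ᵥ x) r)) x)ᵀ *
          jac (fun x : Fin n → ℝ => fun r => σ ((A *ᵥ x) r)) x ∧
      ((jac (fun x : Fin n → ℝ => fun r => σ ((A *ᵥ x) r)) x)ᵀ *
          jac (fun x : Fin n → ℝ => fun r => σ ((A *ᵥ x) r)) x).PosSemidef := by
  intro x
  set MG : Matrix (Fin m) (Fin n) ℝ :=
    Matrix.of fun r j => deriv σ ((A *ᵥ x) r) * A r j with hMG
  have hG := keyG A σ hσ x
  have hjG : jac (fun x : Fin n → ℝ => fun r => σ ((A *ᵥ x) r)) x = MG := jac_eq _ _ _ hG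
  set y : Fin m → ℝ := fun r => σ ((A *ᵥ x) r) with hy
  set MH : Matrix (Fin n) (Fin m) ℝ :=
    Aᵀ * Matrix.of fun r j => deriv γ (y r) * (1 : Matrix (Fin m) (Fin m) ℝ) r j with hMH
  have hH := keyH A γ hγ y
  have hjH : jac (fun y : Fin m → ℝ => Aᵀ *ᵥ fun r => γ (y r)) y = MH := jac_eq _ _ _ hH
  have h1 : MH = MGᵀ := by
    ext i j
    simp [hMH, hMG, Matrix.mul_apply, Matrix.one_apply, hy, hγ', mul_comm]
  refine ⟨by rw [hjH, h1, hjG], ?_, ?_⟩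
  · have hcomp := hH.comp x hG
    have hc2 : HasFDerivAt ((fun y : Fin m → ℝ => Aᵀ *ᵥ fun r => γ (y r)) ∘
        fun x : Fin n → ℝ => fun r => σ ((A *ᵥ x) r))
        ((MH * MG).mulVecLin.toContinuousLinearMap) x := by
      refine hcomp.congr_fderiv ?_
      ext v i
      simp only [ContinuousLinearMap.coe_comp', Function.comp_apply, LinearMap.coe_toContinuousLinearMap', Matrix.mulVecLin_apply, Matrix.mulVec_mulVec]
      rfl
    rw [jac_eq _ _ _ hc2, h1, hjG]
  · rw [hjG]
    have := Matrix.posSemidef_conjTranspose_mul_self MG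
    simpa using this
end

section
/- Let G : ℝⁿ → ℝᵐ and H : ℝᵐ → ℝⁿ be smooth maps with DH_{G(x)} = (DG_x)ᵀ for all x. Then H ∘ G is the gradient of a convex function on ℝⁿ. -/
open Matrix MeasureTheory

lemma clm_pi_apply {k : ℕ} {E : Type*} [NormedAddCommGroup E] [NormedSpace ℝ E]
    (T : (Fin k → ℝ) →L[ℝ] E) (u : Fin k → ℝ) :
    T u = ∑ i, u i • T (Pi.single i 1) := by
  have h : u = ∑ i, u i • (Pi.single i 1 : Fin k → ℝ) := by
    funext j
    simp [Finset.sum_apply, Pi.single_apply]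
  conv_lhs => rw [h]
  simp [map_sum]

lemma key_sym {n m : ℕ} {G : (Fin n → ℝ) → (Fin m → ℝ)} {H : (Fin m → ℝ) → (Fin n → ℝ)}
    (hG : ContDiff ℝ (⊤ : ℕ∞) G) (hH : ContDiff ℝ (⊤ : ℕ∞) H)
    (hconv : ∀ x, jac H (G x) = (jac G x)ᵀ) (x v w : Fin n → ℝ) :
    ∑ i, fderiv ℝ (fun y => H (G y)) x v i * w i
      = ∑ j, fderiv ℝ G x v j * fderiv ℝ G x w j := by
  have hHd : DifferentiableAt ℝ H (G x) := (hH.differentiable (by simp)).differentiableAt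
  have hGd : DifferentiableAt ℝ G x := (hG.differentiable (by simp)).differentiableAt
  have hc : fderiv ℝ (fun y => H (G y)) x = (fderiv ℝ H (G x)).comp (fderiv ℝ G x) :=
    fderiv_comp x hHd hGd
  rw [hc]
  set B := fderiv ℝ H (G x) with hB
  set A := fderiv ℝ G x with hA
  have hBe : ∀ (j : Fin m) (i : Fin n), B (Pi.single j 1) i = A (Pi.single i 1) j := by
    intro j i
    have h := congrFun (congrFun (hconv x) i) j
    simpa [jac, Matrix.transpose_apply, hB, hA] using h
  have hAw : ∀ j, A w j = ∑ i, w i * A (Pi.single i 1) j := by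
    intro j
    conv_lhs => rw [clm_pi_apply A w]
    simp [Finset.sum_apply]
  calc ∑ i, (B.comp A) v i * w i
      = ∑ i, (∑ j, A v j * B (Pi.single j 1) i) * w i := by
        congr 1; funext i
        congr 1
        rw [ContinuousLinearMap.comp_apply, clm_pi_apply B (A v)]
        simp [Finset.sum_apply]
    _ = ∑ j, A v j * ∑ i, w i * A (Pi.single i 1) j := by
        simp only [Finset.sum_mul, Finset.mul_sum]
        rw [Finset.sum_comm]
        congr 1; funext j; congr 1; funext i
        rw [hBe]; ring
    _ = ∑ j, A v j * A w j := by
        congr 1; funext j; rw [hAw]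

lemma grad_int {n m : ℕ} {G : (Fin n → ℝ) → (Fin m → ℝ)} {H : (Fin m → ℝ) → (Fin n → ℝ)}
    (hG : ContDiff ℝ (⊤ : ℕ∞) G) (hH : ContDiff ℝ (⊤ : ℕ∞) H)
    (hconv : ∀ x, jac H (G x) = (jac G x)ᵀ) (x₀ : Fin n → ℝ) :
    HasFDerivAt (fun x => ∫ t in (0:ℝ)..1, ∑ i, H (G (t • x)) i * x i)
      (∑ i, H (G x₀) i • (ContinuousLinearMap.proj i : (Fin n → ℝ) →L[ℝ] ℝ)) x₀ := by
  classical
  set F : (Fin n → ℝ) → (Fin n → ℝ) := fun y => H (G y) with hF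
  have hFc : ContDiff ℝ (⊤ : ℕ∞) F := hH.comp hG
  set g : ℝ × (Fin n → ℝ) → ℝ := fun p => ∑ i, F (p.1 • p.2) i * p.2 i with hgdef
  have hgc : ContDiff ℝ (⊤ : ℕ∞) g := by
    apply ContDiff.sum
    intro i _
    have h1 : ContDiff ℝ (⊤ : ℕ∞) (fun p : ℝ × (Fin n → ℝ) => p.1 • p.2) :=
      contDiff_fst.smul contDiff_snd
    exact (((ContinuousLinearMap.proj i : (Fin n → ℝ) →L[ℝ] ℝ).contDiff).comp
      (hFc.comp h1)).mul ((ContinuousLinearMap.proj i :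
        (Fin n → ℝ) →L[ℝ] ℝ).contDiff.comp contDiff_snd)
  set K : (Fin n → ℝ) →L[ℝ] ℝ × (Fin n → ℝ) :=
    (0 : (Fin n → ℝ) →L[ℝ] ℝ).prod (ContinuousLinearMap.id ℝ (Fin n → ℝ)) with hK
  have hKnorm : ‖K‖ ≤ 1 := by
    refine ContinuousLinearMap.opNorm_le_bound _ zero_le_one ?_
    intro v
    simp [hK, Prod.norm_def, ContinuousLinearMap.prod_apply]
  have hdiff : ∀ (t : ℝ) (x : Fin n → ℝ),
      HasFDerivAt (fun x => g (t, x)) ((fderiv ℝ g (t, x)).comp K) x := by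
    intro t x
    have h1 : HasFDerivAt (fun y : Fin n → ℝ => ((t, y) : ℝ × (Fin n → ℝ))) K x :=
      HasFDerivAt.prodMk (hasFDerivAt_const t x) (hasFDerivAt_id x)
    exact ((hgc.differentiable (by simp) (t, x)).hasFDerivAt).comp x h1
  -- compactness bound
  obtain ⟨C, hC⟩ : ∃ C, ∀ p ∈ (Set.Icc (0:ℝ) 1 ×ˢ Metric.closedBall x₀ 1),
      ‖fderiv ℝ g p‖ ≤ C :=
    (isCompact_Icc.prod (isCompact_closedBall x₀ 1)).exists_bound_of_continuousOn
      ((hgc.continuous_fderiv (by simp)).continuousOn)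
  have hC0 : 0 ≤ C := le_trans (norm_nonneg _)
    (hC (0, x₀) ⟨⟨le_refl _, zero_le_one⟩, Metric.mem_closedBall_self zero_le_one⟩)
  have hDcont : Continuous (fun t : ℝ => (fderiv ℝ g (t, x₀)).comp K) :=
    ((hgc.continuous_fderiv (by simp)).comp
      (continuous_id.prodMk continuous_const)).clm_comp continuous_const
  have H1 : HasFDerivAt (fun x => ∫ t in (0:ℝ)..1, g (t, x))
      (∫ t in (0:ℝ)..1, (fderiv ℝ g (t, x₀)).comp K) x₀ := by
    apply intervalIntegral.hasFDerivAt_integral_of_dominated_of_fderiv_le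
      (F' := fun x t => (fderiv ℝ g (t, x)).comp K) (bound := fun _ => C) (s := Metric.ball x₀ 1) (Metric.ball_mem_nhds x₀ one_pos)
    · exact Filter.Eventually.of_forall fun x =>
        (hgc.continuous.comp (continuous_id.prodMk continuous_const)).aestronglyMeasurable
    · exact (hgc.continuous.comp (continuous_id.prodMk continuous_const)).intervalIntegrable 0 1
    · exact hDcont.aestronglyMeasurable
    · refine Filter.Eventually.of_forall fun t ht x hx => ?_
      rw [Set.uIoc_of_le zero_le_one] at ht
      calc ‖(fderiv ℝ g (t, x)).comp K‖ ≤ ‖fderiv ℝ g (t, x)‖ * ‖K‖ :=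
            ContinuousLinearMap.opNorm_comp_le _ _
        _ ≤ C * 1 := mul_le_mul
            (hC (t, x) ⟨⟨le_of_lt ht.1, ht.2⟩, Metric.ball_subset_closedBall hx⟩)
            hKnorm (norm_nonneg _) hC0
        _ = C := mul_one C
    · exact intervalIntegrable_const
    · exact Filter.Eventually.of_forall fun t _ x _ => hdiff t x
  have hDint : IntervalIntegrable (fun t => (fderiv ℝ g (t, x₀)).comp K) volume 0 1 :=
    hDcont.intervalIntegrable 0 1
  have heq : (∫ t in (0:ℝ)..1, (fderiv ℝ g (t, x₀)).comp K)
      = ∑ i, H (G x₀) i • (ContinuousLinearMap.proj i : (Fin n → ℝ) →L[ℝ] ℝ) := by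
    refine ContinuousLinearMap.ext fun v => ?_
    rw [ContinuousLinearMap.intervalIntegral_apply hDint v]
    have hcurve : ∀ s : ℝ, HasDerivAt (fun s : ℝ => x₀ + s • v) v s := by
      intro s
      have := ((hasDerivAt_id s).smul_const v).const_add x₀
      simpa using this
    have hsym : ∀ z : Fin n → ℝ,
        ∑ i, fderiv ℝ F z v i * x₀ i = ∑ i, fderiv ℝ F z x₀ i * v i := by
      intro z
      rw [hF, key_sym hG hH hconv z v x₀, key_sym hG hH hconv z x₀ v]
      exact Finset.sum_congr rfl fun j _ => mul_comm _ _
    have hDv : ∀ t : ℝ, ((fderiv ℝ g (t, x₀)).comp K) v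
        = ∑ i, (fderiv ℝ F (t • x₀) (t • v) i * x₀ i + F (t • x₀) i * v i) := by
      intro t
      have hcurve2 : HasDerivAt (fun s : ℝ => t • (x₀ + s • v)) (t • v) 0 :=
        (hcurve 0).const_smul t
      have hFcomp : HasDerivAt (fun s : ℝ => F (t • (x₀ + s • v)))
          (fderiv ℝ F (t • x₀) (t • v)) 0 := by
        have hf : HasFDerivAt F (fderiv ℝ F (t • x₀)) (t • (x₀ + (0:ℝ) • v)) := by
          have h0 : t • (x₀ + (0:ℝ) • v) = t • x₀ := by simp
          rw [h0]; exact ((hFc.differentiable (by simp)) (t • x₀)).hasFDerivAt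
        exact hf.comp_hasDerivAt 0 hcurve2
      have hgi : ∀ i : Fin n, HasDerivAt (fun s : ℝ => F (t • (x₀ + s • v)) i * (x₀ + s • v) i)
          (fderiv ℝ F (t • x₀) (t • v) i * x₀ i + F (t • x₀) i * v i) 0 := by
        intro i
        have h1 : HasDerivAt (fun s : ℝ => F (t • (x₀ + s • v)) i)
            (fderiv ℝ F (t • x₀) (t • v) i) 0 := by
          have := (ContinuousLinearMap.proj (R := ℝ) (φ := fun _ : Fin n => ℝ)
            i).hasFDerivAt.comp_hasDerivAt 0 hFcomp
          simpa [Function.comp_def, Pi.mul_def] using this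
        have h2 : HasDerivAt (fun s : ℝ => (x₀ + s • v) i) (v i) 0 := by
          have := (ContinuousLinearMap.proj (R := ℝ) (φ := fun _ : Fin n => ℝ)
            i).hasFDerivAt.comp_hasDerivAt 0 (hcurve 0)
          simpa [Function.comp_def, Pi.mul_def] using this
        have := h1.mul h2
        simpa [Function.comp_def, Pi.mul_def] using this
      have h2' : HasDerivAt (fun s : ℝ => g (t, x₀ + s • v))
          (∑ i, (fderiv ℝ F (t • x₀) (t • v) i * x₀ i + F (t • x₀) i * v i)) 0 :=
        HasDerivAt.fun_sum fun i _ => hgi i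
      have h3 : HasDerivAt (fun s : ℝ => g (t, x₀ + s • v))
          (((fderiv ℝ g (t, x₀)).comp K) v) 0 := by
        have hf : HasFDerivAt (fun x => g (t, x)) ((fderiv ℝ g (t, x₀)).comp K)
            (x₀ + (0:ℝ) • v) := by
          have h0 : x₀ + (0:ℝ) • v = x₀ := by simp
          rw [h0]; exact hdiff t x₀
        exact hf.comp_hasDerivAt 0 (hcurve 0)
      exact h3.unique h2'
    have hψ : ∀ t : ℝ, HasDerivAt (fun t : ℝ => t * ∑ i, F (t • x₀) i * v i)
        (((fderiv ℝ g (t, x₀)).comp K) v) t := by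
      intro t
      have hcurve3 : HasDerivAt (fun s : ℝ => s • x₀) x₀ t := by
        have := (hasDerivAt_id t).smul_const x₀
        simpa using this
      have hFcomp : HasDerivAt (fun s : ℝ => F (s • x₀)) (fderiv ℝ F (t • x₀) x₀) t := by
        have := ((hFc.differentiable (by simp)) (t • x₀)).hasFDerivAt.comp_hasDerivAt t hcurve3
        exact this
      have hS : HasDerivAt (fun s : ℝ => ∑ i, F (s • x₀) i * v i)
          (∑ i, fderiv ℝ F (t • x₀) x₀ i * v i) t := by
        refine HasDerivAt.fun_sum fun i _ => ?_
        have h1 : HasDerivAt (fun s : ℝ => F (s • x₀) i) (fderiv ℝ F (t • x₀) x₀ i) t := by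
          have := (ContinuousLinearMap.proj (R := ℝ) (φ := fun _ : Fin n => ℝ)
            i).hasFDerivAt.comp_hasDerivAt t hFcomp
          simpa [Function.comp_def, Pi.mul_def] using this
        exact h1.mul_const (v i)
      have := (hasDerivAt_id t).mul hS
      have hval : ((fderiv ℝ g (t, x₀)).comp K) v
          = 1 * (∑ i, F (t • x₀) i * v i) + t * ∑ i, fderiv ℝ F (t • x₀) x₀ i * v i := by
        rw [hDv t, Finset.sum_add_distrib]
        have h4 : ∑ i, fderiv ℝ F (t • x₀) (t • v) i * x₀ i
            = t * ∑ i, fderiv ℝ F (t • x₀) x₀ i * v i := by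
          rw [← hsym (t • x₀), (fderiv ℝ F (t • x₀)).map_smul, Finset.mul_sum]
          exact Finset.sum_congr rfl fun i _ => by
            simp only [Pi.smul_apply, smul_eq_mul]; ring
        rw [h4]; ring
      rw [hval]
      simpa [Function.comp_def, Pi.mul_def] using this
    have hintv : IntervalIntegrable (fun t : ℝ => ((fderiv ℝ g (t, x₀)).comp K) v)
        volume 0 1 :=
      (((ContinuousLinearMap.apply ℝ ℝ v).continuous).comp hDcont).intervalIntegrable 0 1
    rw [intervalIntegral.integral_eq_sub_of_hasDerivAt (fun t _ => hψ t) hintv]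
    simp [ContinuousLinearMap.sum_apply, hF, mul_comm]
  rw [heq] at H1
  exact H1

/-- If a smooth `H` convexifies a smooth `G`, i.e. `DH_{G(x)} = (DG_x)ᵀ`
for all `x`, then `H ∘ G` is the gradient of a convex function on ℝⁿ. -/
theorem stmt_6 (n m : ℕ) (G : (Fin n → ℝ) → (Fin m → ℝ)) (H : (Fin m → ℝ) → (Fin n → ℝ))
    (hG : ContDiff ℝ (⊤ : ℕ∞) G) (hH : ContDiff ℝ (⊤ : ℕ∞) H)
    (hconv : ∀ x, jac H (G x) = (jac G x)ᵀ) :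
    ∃ φ : (Fin n → ℝ) → ℝ, Differentiable ℝ φ ∧ ConvexOn ℝ Set.univ φ ∧
      ∀ x, grad φ x = H (G x) := by
  classical
  set φ : (Fin n → ℝ) → ℝ := fun x => ∫ t in (0:ℝ)..1, ∑ i, H (G (t • x)) i * x i with hφ
  have main : ∀ z, HasFDerivAt φ
      (∑ i, H (G z) i • (ContinuousLinearMap.proj i : (Fin n → ℝ) →L[ℝ] ℝ)) z :=
    fun z => grad_int hG hH hconv z
  have hFc : ContDiff ℝ (⊤ : ℕ∞) (fun y => H (G y)) := hH.comp hG
  have hdiffφ : Differentiable ℝ φ := fun z => (main z).differentiableAt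
  refine ⟨φ, hdiffφ, ?_, ?_⟩
  · -- convexity
    have hline : ∀ (x v : Fin n → ℝ) (t : ℝ),
        HasDerivAt (fun t : ℝ => φ (x + t • v)) (∑ i, H (G (x + t • v)) i * v i) t := by
      intro x v t
      have hc : HasDerivAt (fun t : ℝ => x + t • v) v t := by
        have := ((hasDerivAt_id t).smul_const v).const_add x
        simpa using this
      have := (main (x + t • v)).comp_hasDerivAt t hc
      simpa [ContinuousLinearMap.sum_apply, smul_eq_mul, Function.comp_def] using this
    have hcvx : ∀ (x v : Fin n → ℝ), ConvexOn ℝ Set.univ (fun t : ℝ => φ (x + t • v)) := by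
      intro x v
      have hq : ∀ t : ℝ, HasDerivAt (fun t : ℝ => ∑ i, H (G (x + t • v)) i * v i)
          (∑ i, fderiv ℝ (fun y => H (G y)) (x + t • v) v i * v i) t := by
        intro t
        have hc : HasDerivAt (fun t : ℝ => x + t • v) v t := by
          have := ((hasDerivAt_id t).smul_const v).const_add x
          simpa using this
        have hFcomp : HasDerivAt (fun t : ℝ => H (G (x + t • v)))
            (fderiv ℝ (fun y => H (G y)) (x + t • v) v) t := by
          have := ((hFc.differentiable (by simp)) (x + t • v)).hasFDerivAt.comp_hasDerivAt t hc
          exact this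
        refine HasDerivAt.fun_sum fun i _ => ?_
        have h1 : HasDerivAt (fun t : ℝ => H (G (x + t • v)) i)
            (fderiv ℝ (fun y => H (G y)) (x + t • v) v i) t := by
          have := (ContinuousLinearMap.proj (R := ℝ) (φ := fun _ : Fin n => ℝ)
            i).hasFDerivAt.comp_hasDerivAt t hFcomp
          simpa [Function.comp_def, Pi.mul_def] using this
        exact h1.mul_const (v i)
      have hderiv : deriv (fun t : ℝ => φ (x + t • v))
          = fun t => ∑ i, H (G (x + t • v)) i * v i := by
        funext t; exact (hline x v t).deriv
      refine Monotone.convexOn_univ_of_deriv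
        (fun t => (hline x v t).differentiableAt) ?_
      rw [hderiv]
      refine monotone_of_deriv_nonneg (fun t => (hq t).differentiableAt) fun t => ?_
      rw [(hq t).deriv, key_sym hG hH hconv (x + t • v) v v]
      exact Finset.sum_nonneg fun j _ => mul_self_nonneg _
    refine ⟨convex_univ, fun x _ y _ a b ha hb hab => ?_⟩
    have h01 := (hcvx x (y - x)).2 (Set.mem_univ (0:ℝ)) (Set.mem_univ (1:ℝ)) ha hb hab
    have hx : x + (a • (0:ℝ) + b • (1:ℝ)) • (y - x) = a • x + b • y := by
      have ha' : a = 1 - b := by linarith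
      subst ha'
      funext i
      simp only [Pi.add_apply, Pi.smul_apply, Pi.sub_apply, smul_eq_mul]
      ring
    have h01' : φ (x + (a • (0:ℝ) + b • (1:ℝ)) • (y - x))
        ≤ a • φ (x + (0:ℝ) • (y - x)) + b • φ (x + (1:ℝ) • (y - x)) := h01
    rw [hx] at h01'
    simpa using h01'
  · -- gradient identity
    intro x
    funext i
    have hfd : fderiv ℝ φ x
        = ∑ i, H (G x) i • (ContinuousLinearMap.proj i : (Fin n → ℝ) →L[ℝ] ℝ) :=
      (main x).fderiv
    simp only [grad, hfd, ContinuousLinearMap.sum_apply, ContinuousLinearMap.smul_apply,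
      ContinuousLinearMap.proj_apply, smul_eq_mul]
    simp [Pi.single_apply]
end

section
/- For G(x) = σ(Ax + b) with σ smooth and applied componentwise, the map F(x) = ∫₀¹ (DG_{sx})ᵀ DG_{sx} x ds is the gradient of a convex function on ℝⁿ. -/
open Matrix MeasureTheory

lemma ftc0 {f : ℝ → ℝ} (hf : Continuous f) (u : ℝ) :
    HasDerivAt (fun t => ∫ v in (0:ℝ)..t, f v) (f u) u :=
  intervalIntegral.integral_hasDerivAt_right (hf.intervalIntegrable 0 u)
    (hf.stronglyMeasurableAtFilter _ _) hf.continuousAt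

lemma primitive_mono {f : ℝ → ℝ} (hf : Continuous f) (h0 : ∀ v, 0 ≤ f v) :
    Monotone (fun t => ∫ v in (0:ℝ)..t, f v) := by
  intro a c hac
  have hadd := intervalIntegral.integral_add_adjacent_intervals
    (hf.intervalIntegrable 0 a) (hf.intervalIntegrable a c) (μ := volume)
  have hpos : 0 ≤ ∫ v in a..c, f v :=
    intervalIntegral.integral_nonneg hac (fun u _ => h0 u)
  simp only []
  linarith

lemma scale_int {q : ℝ → ℝ} (u : ℝ) :
    ∫ s in (0:ℝ)..1, u * q (u * s) = ∫ v in (0:ℝ)..u, q v := by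
  rcases eq_or_ne u 0 with hu | hu
  · simp [hu]
  · rw [intervalIntegral.integral_const_mul, intervalIntegral.integral_comp_mul_left q hu]
    simp [smul_eq_mul, ← mul_assoc, mul_inv_cancel₀ hu]

lemma convexOn_finset_sum {n : ℕ} {ι : Type*} (t : Finset ι)
    {f : ι → (Fin n → ℝ) → ℝ} (h : ∀ i ∈ t, ConvexOn ℝ Set.univ (f i)) :
    ConvexOn ℝ Set.univ (fun x => ∑ i ∈ t, f i x) := by
  classical
  induction t using Finset.induction with
  | empty => simpa using convexOn_const (0:ℝ) convex_univ
  | insert _ _ hnotmem ih =>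
    rename_i a s
    simp only [Finset.sum_insert hnotmem]
    exact (h a (Finset.mem_insert_self a s)).add
      (ih (fun i hi => h i (Finset.mem_insert_of_mem hi)))

/-- For a one-layer map `G(x) = σ(Ax + b)`, the convexification
`F(x) = ∫₀¹ (DG_{sx})ᵀ DG_{sx} x ds` is the gradient of a convex function on ℝⁿ. -/
theorem stmt_11 (m n : ℕ) (A : Matrix (Fin m) (Fin n) ℝ) (b : Fin m → ℝ)
    (σ : ℝ → ℝ) (hσ : ContDiff ℝ (⊤ : ℕ∞) σ) :
    ∃ φ : (Fin n → ℝ) → ℝ, Differentiable ℝ φ ∧ ConvexOn ℝ Set.univ φ ∧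
      ∀ x, grad φ x = cvxify (fun x : Fin n → ℝ => fun r => σ ((A *ᵥ x) r + b r)) x := by
  classical
  have hσd : Differentiable ℝ σ := hσ.differentiable (by simp)
  have hσ'c : Continuous (deriv σ) := hσ.continuous_deriv (by simp)
  set G : (Fin n → ℝ) → (Fin m → ℝ) := fun x => fun r => σ ((A *ᵥ x) r + b r) with hGdef
  -- the linear functionals x ↦ (A x)_r, as continuous linear maps
  set ℓ : Fin m → ((Fin n → ℝ) →L[ℝ] ℝ) := fun r =>
    LinearMap.toContinuousLinearMap ((LinearMap.proj r).comp (Matrix.mulVecLin A)) with hℓdef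
  have hℓ : ∀ r x, ℓ r x = (A *ᵥ x) r := fun r x => rfl
  have hℓs : ∀ r j, ℓ r (Pi.single j 1) = A r j := by
    intro r j; rw [hℓ]; simp
  set q : Fin m → ℝ → ℝ := fun r v => (deriv σ (v + b r))^2 with hqdef
  have hqc : ∀ r, Continuous (q r) := fun r =>
    (hσ'c.comp (continuous_id.add continuous_const)).pow 2
  set Q : Fin m → ℝ → ℝ := fun r t => ∫ v in (0:ℝ)..t, q r v with hQdef
  have hQd : ∀ r u, HasDerivAt (Q r) (q r u) u := fun r u => ftc0 (hqc r) u
  have hQc : ∀ r, Continuous (Q r) := fun r =>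
    Differentiable.continuous (fun u => (hQd r u).differentiableAt)
  have hQmono : ∀ r, Monotone (Q r) := fun r => primitive_mono (hqc r) (fun v => sq_nonneg _)
  set ψ : Fin m → ℝ → ℝ := fun r t => ∫ v in (0:ℝ)..t, Q r v with hψdef
  have hψd : ∀ r u, HasDerivAt (ψ r) (Q r u) u := fun r u => ftc0 (hQc r) u
  have hψDiff : ∀ r, Differentiable ℝ (ψ r) := fun r u => (hψd r u).differentiableAt
  have hψconv : ∀ r, ConvexOn ℝ Set.univ (ψ r) := by
    intro r
    refine Monotone.convexOn_univ_of_deriv (hψDiff r) ?_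
    have : deriv (ψ r) = Q r := funext fun u => (hψd r u).deriv
    rw [this]; exact hQmono r
  refine ⟨fun x => ∑ r, ψ r ((A *ᵥ x) r), ?_, ?_, ?_⟩
  · -- differentiability
    intro x
    exact DifferentiableAt.fun_sum fun r _ =>
      ((hψDiff r).differentiableAt).comp x ((ℓ r).differentiableAt)
  · -- convexity
    refine convexOn_finset_sum Finset.univ (fun r _ => ?_)
    have := (hψconv r).comp_linearMap ((LinearMap.proj r).comp (Matrix.mulVecLin A))
    exact this
  · -- gradient identity
    intro x
    set u : Fin m → ℝ := A *ᵥ x with hu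
    have hφD : HasFDerivAt (fun y => ∑ r, ψ r ((A *ᵥ y) r))
        (∑ r, Q r (u r) • ℓ r) x := by
      refine HasFDerivAt.fun_sum (fun r _ => ?_)
      exact (hψd r (u r)).comp_hasFDerivAt x ((ℓ r).hasFDerivAt)
    -- Jacobian of G
    have hG : ∀ y : Fin n → ℝ, HasFDerivAt G
        (ContinuousLinearMap.pi fun r => deriv σ ((A *ᵥ y) r + b r) • ℓ r) y := by
      intro y
      apply hasFDerivAt_pi''
      intro r
      have h1 : HasFDerivAt (fun x : Fin n → ℝ => (A *ᵥ x) r + b r) (ℓ r) y :=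
        ((ℓ r).hasFDerivAt).add_const (b r)
      have h2 := (hσd ((A *ᵥ y) r + b r)).hasDerivAt.comp_hasFDerivAt y h1
      rw [ContinuousLinearMap.proj_pi]
      exact h2
    have hjac : ∀ y : Fin n → ℝ, jac G y =
        Matrix.of fun i j => deriv σ ((A *ᵥ y) i + b i) * A i j := by
      intro y
      ext i j
      rw [jac, Matrix.of_apply, (hG y).fderiv]
      simp [ContinuousLinearMap.pi_apply, hℓs]
    -- compute the integrand componentwise
    have hint : ∀ s : ℝ, (((jac G (s • x))ᵀ * jac G (s • x)) *ᵥ x) =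
        fun j => ∑ r, A r j * (u r * q r (u r * s)) := by
      intro s
      funext j
      have hAs : A *ᵥ (s • x) = s • u := by rw [hu, Matrix.mulVec_smul]
      rw [hjac (s • x), hAs]
      simp only [Pi.smul_apply, smul_eq_mul]
      simp only [Matrix.mulVec, Matrix.mul_apply, dotProduct, Matrix.transpose_apply,
        Matrix.of_apply, Finset.sum_mul]
      rw [Finset.sum_comm]
      refine Finset.sum_congr rfl (fun r _ => ?_)
      have hq' : q r (u r * s) = deriv σ (s * u r + b r) ^ 2 := by
        simp only [hqdef]; rw [mul_comm (u r) s]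
      rw [hq']
      have husum : u r = ∑ i, A r i * x i := rfl
      rw [husum]
      simp only [Finset.sum_mul, Finset.mul_sum]
      refine Finset.sum_congr rfl (fun i _ => ?_)
      ring
    -- continuity / integrability of the integrand
    have hcont : Continuous fun s : ℝ => (((jac G (s • x))ᵀ * jac G (s • x)) *ᵥ x) := by
      simp only [hint]
      refine continuous_pi (fun j => continuous_finset_sum _ (fun r _ => ?_))
      exact continuous_const.mul (continuous_const.mul ((hqc r).comp
        (continuous_const.mul continuous_id)))
    have hII : IntervalIntegrable
        (fun s : ℝ => (((jac G (s • x))ᵀ * jac G (s • x)) *ᵥ x)) volume 0 1 :=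
      hcont.intervalIntegrable 0 1
    -- now compute both sides
    funext i
    have hLHS : grad (fun x => ∑ r, ψ r ((A *ᵥ x) r)) x i = ∑ r, Q r (u r) * A r i := by
      rw [grad, hφD.fderiv]
      simp [ContinuousLinearMap.sum_apply, hℓs]
    rw [hLHS]
    have hRHS : cvxify G x i =
        ∫ s in (0:ℝ)..1, ∑ r, A r i * (u r * q r (u r * s)) := by
      have key := (ContinuousLinearMap.proj (R := ℝ) (φ := fun _ : Fin n => ℝ)
        i).intervalIntegral_comp_comm hII
      have h1 : cvxify G x i = (ContinuousLinearMap.proj (R := ℝ)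
          (φ := fun _ : Fin n => ℝ) i)
          (∫ s in (0:ℝ)..1, ((jac G (s • x))ᵀ * jac G (s • x)) *ᵥ x) := rfl
      rw [h1, ← key]
      simp only [ContinuousLinearMap.proj_apply]
      congr 1
      funext s
      rw [hint s]
    rw [hRHS]
    rw [intervalIntegral.integral_finset_sum (fun r _ =>
      (Continuous.intervalIntegrable (by
        exact continuous_const.mul (continuous_const.mul ((hqc r).comp
          (continuous_const.mul continuous_id)))) 0 1))]
    refine Finset.sum_congr rfl (fun r _ => ?_)
    rw [intervalIntegral.integral_const_mul, scale_int (u r)]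
    exact mul_comm _ _
end
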